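/- arXiv:2203.12143 — 5 statements merged into one kernel-verified Lean document; each statement's English description precedes it below -/
import Mathlib

section
/- Let R > 0 and γ ∈ (0,1). Let q = (t₀, x₀) with t₀ ≥ 0, x₀ ∈ ℝ³ and t₀ + |x₀| < R, and let r_q(x) = min{|x|, |x₀|}. Then for every point (t, x) on the truncated backward light cone N⁻(q) (i.e. t ≥ 0 and t₀ − t = |x − x₀|) with x ≠ 0 and x ≠ x₀, one has W_q(t,x)⁻¹ ≤ 3 (R − t − r_q(x))^{−γ}, where W_q(t,x)⁻¹ = ((1+τ) u_*^{−γ} + (1−τ) v_*^{−γ})/2 with u_* = R − t + |x|, v_* = R − t − |x| and τ = (x · (x − x₀))/(|x| |x − x₀|). -/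
set_option maxHeartbeats 1000000 in
/-- **Lemma 2.1 (lower bound for `W_q`).**
Let `R > 0` and `γ ∈ (0,1)`. Let `q = (t₀, x₀)` with `t₀ ≥ 0`, `x₀ ∈ ℝ³` and
`t₀ + |x₀| < R`, and `r_q(x) = min {|x|, |x₀|}`. Then for every point `(t, x)` on the
truncated backward light cone `N⁻(q)` (i.e. `t ≥ 0` and `t₀ − t = |x − x₀|`) with
`x ≠ 0` and `x ≠ x₀`, one has `W_q(t,x)⁻¹ ≤ 3 (R − t − r_q(x))^{−γ}`, where
`W_q(t,x)⁻¹ = ((1+τ) u_*^{−γ} + (1−τ) v_*^{−γ})/2`, `u_* = R − t + |x|`,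
`v_* = R − t − |x|` and `τ = (x · (x − x₀))/(|x| |x − x₀|)`. -/
theorem Wq_inv_lower_bound
    (R γ : ℝ) (hR : 0 < R) (hγ0 : 0 < γ) (hγ1 : γ < 1)
    (t₀ t : ℝ) (x₀ x : EuclideanSpace ℝ (Fin 3))
    (ht₀ : 0 ≤ t₀) (hq : t₀ + ‖x₀‖ < R)
    (ht : 0 ≤ t) (hcone : t₀ - t = ‖x - x₀‖)
    (hx : x ≠ 0) (hxx₀ : x ≠ x₀) :
    ((1 + (inner ℝ x (x - x₀) : ℝ) / (‖x‖ * ‖x - x₀‖)) * (R - t + ‖x‖) ^ (-γ)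
        + (1 - (inner ℝ x (x - x₀) : ℝ) / (‖x‖ * ‖x - x₀‖)) * (R - t - ‖x‖) ^ (-γ)) / 2
      ≤ 3 * (R - t - min ‖x‖ ‖x₀‖) ^ (-γ) := by
  have ha : (0:ℝ) < ‖x‖ := norm_pos_iff.mpr hx
  have hd : (0:ℝ) < ‖x - x₀‖ := by
    rw [norm_pos_iff]; exact sub_ne_zero.mpr hxx₀
  have hb : (0:ℝ) ≤ ‖x₀‖ := norm_nonneg _
  set a := ‖x‖ with hadef
  set b := ‖x₀‖ with hbdef
  set d := ‖x - x₀‖ with hddef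
  set τ : ℝ := (inner ℝ x (x - x₀) : ℝ) / (a * d) with hτdef
  have had : 0 < a * d := mul_pos ha hd
  have hcs : |(inner ℝ x (x - x₀) : ℝ)| ≤ a * d := abs_real_inner_le_norm x (x - x₀)
  have hτ1 : τ ≤ 1 := by
    rw [hτdef, div_le_one had]; exact (abs_le.mp hcs).2
  have hτ2 : -1 ≤ τ := by
    rw [hτdef, le_div_iff₀ had]; nlinarith [(abs_le.mp hcs).1]
  -- inner product identity
  have hinner : (inner ℝ x (x - x₀) : ℝ) = (a^2 + d^2 - b^2)/2 := by
    have h := norm_sub_sq_real x (x - x₀)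
    rw [sub_sub_cancel] at h
    rw [← hadef, ← hbdef, ← hddef] at h
    linarith
  -- triangle inequalities
  have htri1 : a - b ≤ d := by
    have := norm_sub_norm_le x x₀; rw [← hadef, ← hbdef, ← hddef] at this; linarith
  have htri2 : b - a ≤ d := by
    have := norm_sub_norm_le x₀ x
    rw [norm_sub_rev, ← hadef, ← hbdef, ← hddef] at this; linarith
  have htri3 : a ≤ b + d := by linarith
  -- positivity of v*
  have hdt : d = t₀ - t := hcone.symm
  have hv : 0 < R - t - a := by
    have : t + a ≤ t₀ + b := by rw [hdt] at htri3; linarith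
    linarith
  have hu : 0 < R - t + a := by linarith
  rcases le_total a b with hab | hab
  · -- case ‖x‖ ≤ ‖x₀‖
    rw [min_eq_left hab]
    have huv : (R - t + a) ^ (-γ) ≤ (R - t - a) ^ (-γ) :=
      Real.rpow_le_rpow_of_nonpos hv (by linarith) (by linarith)
    have hvpos : 0 < (R - t - a) ^ (-γ) := Real.rpow_pos_of_pos hv _
    nlinarith [mul_le_mul_of_nonneg_left huv (by linarith : (0:ℝ) ≤ 1 + τ)]
  · -- case ‖x₀‖ ≤ ‖x‖
    rw [min_eq_right hab]
    set w := R - t - b with hwdef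
    set s := a - b with hsdef
    have hs : 0 ≤ s := by linarith
    have hw : 0 < w := by linarith
    have hdw : d < w := by
      rw [hdt, hwdef]; linarith
    -- first term
    have h1 : (R - t + a) ^ (-γ) ≤ w ^ (-γ) :=
      Real.rpow_le_rpow_of_nonpos hw (by simp only [hwdef]; linarith) (by linarith)
    -- second term: 1 - τ ≤ (d - s)/d ≤ (w - s)/w ≤ ((w-s)/w)^γ
    have hsq : (a - b)^2 ≤ d^2 := by nlinarith
    have key1 : 1 - τ ≤ (d - s)/d := by
      have e : 1 - τ = (2*a*d - a^2 - d^2 + b^2)/(2*a*d) := by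
        rw [hτdef, hinner]; field_simp; ring
      rw [e, div_le_div_iff₀ (by positivity) hd, hsdef]
      nlinarith [mul_le_mul_of_nonneg_left hsq hd.le]
    have key2 : (d - s)/d ≤ (w - s)/w := by
      rw [div_le_div_iff₀ hd hw]
      nlinarith [mul_le_mul_of_nonneg_left hdw.le hs]
    have hρ0 : (0:ℝ) < (w - s)/w := by
      apply div_pos _ hw
      have : w - s = R - t - a := by rw [hwdef, hsdef]; ring
      rw [this]; exact hv
    have hρ1 : (w - s)/w ≤ 1 := by
      rw [div_le_one hw]; linarith
    have key3 : (w - s)/w ≤ ((w - s)/w) ^ γ := by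
      have := Real.rpow_le_rpow_of_exponent_ge hρ0 hρ1 hγ1.le
      rwa [Real.rpow_one] at this
    have hτle : 1 - τ ≤ ((w - s)/w) ^ γ := le_trans (le_trans key1 key2) key3
    have hws : R - t - a = w - s := by rw [hwdef, hsdef]; ring
    have hwspos : 0 < w - s := by rw [← hws]; exact hv
    have hprod : ((w - s)/w) ^ γ * (w - s) ^ (-γ) = w ^ (-γ) := by
      rw [Real.div_rpow hwspos.le hw.le, Real.rpow_neg hwspos.le, Real.rpow_neg hw.le]
      field_simp
    have hvγpos : 0 < (w - s) ^ (-γ) := Real.rpow_pos_of_pos hwspos _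
    have h2 : (1 - τ) * (R - t - a) ^ (-γ) ≤ w ^ (-γ) := by
      rw [hws, ← hprod]
      exact mul_le_mul_of_nonneg_right hτle hvγpos.le
    have hwγpos : 0 < w ^ (-γ) := Real.rpow_pos_of_pos hw _
    nlinarith [mul_le_mul_of_nonneg_left h1 (by linarith : (0:ℝ) ≤ 1 + τ)]
end

section
/- Let R > 0, and let q = (t₀, x₀) with t₀ ≥ 0, x₀ ∈ ℝ³ and t₀ + |x₀| < R. Then for every point (t, x) on the truncated backward light cone N⁻(q) (i.e. t ≥ 0 and t₀ − t = |x − x₀|) with x ≠ 0 and x ≠ x₀, setting τ = (x · (x − x₀))/(|x| |x − x₀|), one has (1 − τ)(R − t − |x₀|) ≤ 4 (R − t − |x|). -/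
/-- **Key inequality in the proof of Lemma 2.1.**
Let `R > 0`, and let `q = (t₀, x₀)` with `t₀ ≥ 0`, `x₀ ∈ ℝ³` and `t₀ + |x₀| < R`.
Then for every point `(t, x)` on the truncated backward light cone `N⁻(q)`
(i.e. `t ≥ 0` and `t₀ − t = |x − x₀|`) with `x ≠ 0` and `x ≠ x₀`, setting
`τ = (x · (x − x₀))/(|x| |x − x₀|)`, one has
`(1 − τ)(R − t − |x₀|) ≤ 4 (R − t − |x|)`. -/
theorem one_sub_tau_mul_le
    (R : ℝ) (hR : 0 < R)
    (t₀ t : ℝ) (x₀ x : EuclideanSpace ℝ (Fin 3))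
    (ht₀ : 0 ≤ t₀) (hq : t₀ + ‖x₀‖ < R)
    (ht : 0 ≤ t) (hcone : t₀ - t = ‖x - x₀‖)
    (hx : x ≠ 0) (hxx₀ : x ≠ x₀) :
    (1 - (inner ℝ x (x - x₀) : ℝ) / (‖x‖ * ‖x - x₀‖)) * (R - t - ‖x₀‖)
      ≤ 4 * (R - t - ‖x‖) := by
  have ha : 0 < ‖x‖ := norm_pos_iff.mpr hx
  have hb : 0 < ‖x - x₀‖ := norm_pos_iff.mpr (sub_ne_zero.mpr hxx₀)
  have hc : 0 ≤ ‖x₀‖ := norm_nonneg _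
  have hnorm : ‖x₀‖ ^ 2 = ‖x‖ ^ 2 - 2 * (inner ℝ x (x - x₀) : ℝ) + ‖x - x₀‖ ^ 2 := by
    have h := norm_sub_sq_real x (x - x₀)
    rwa [sub_sub_cancel] at h
  have htr1 : ‖x₀‖ ≤ ‖x‖ + ‖x - x₀‖ := by
    have h := norm_sub_le x (x - x₀)
    rwa [sub_sub_cancel] at h
  have htr2 : ‖x‖ ≤ ‖x - x₀‖ + ‖x₀‖ := by
    have h := norm_add_le (x - x₀) x₀
    rwa [sub_add_cancel] at h
  have htr3 : ‖x - x₀‖ ≤ ‖x‖ + ‖x₀‖ := norm_sub_le x x₀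
  have key : (1 - (inner ℝ x (x - x₀) : ℝ) / (‖x‖ * ‖x - x₀‖))
      = (2 * ‖x‖ * ‖x - x₀‖ - ‖x‖ ^ 2 - ‖x - x₀‖ ^ 2 + ‖x₀‖ ^ 2)
        / (2 * (‖x‖ * ‖x - x₀‖)) := by
    have hI : (inner ℝ x (x - x₀) : ℝ)
        = (‖x‖ ^ 2 + ‖x - x₀‖ ^ 2 - ‖x₀‖ ^ 2) / 2 := by linarith
    rw [hI]
    field_simp
    ring
  rw [key, div_mul_eq_mul_div, div_le_iff₀ (by positivity)]
  set a := ‖x‖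
  set b := ‖x - x₀‖
  set c := ‖x₀‖
  have hu : 0 ≤ b + c - a := by linarith
  have hv : 0 ≤ a + c - b := by linarith
  have hE : 0 < R - t₀ - c := by linarith
  have htb : t = t₀ - b := by linarith
  subst htb
  nlinarith [mul_nonneg (mul_nonneg hu (by linarith : (0:ℝ) ≤ 2*a - (a+c-b))) (by linarith : (0:ℝ) ≤ R - t₀ - c + b),
    mul_nonneg (mul_nonneg ha.le (by linarith : (0:ℝ) ≤ 2*b - (b+c-a))) hE.le,
    mul_nonneg (mul_nonneg ha.le hb.le) hu,
    mul_pos ha hb, mul_nonneg ha.le hE.le, mul_nonneg hb.le hE.le]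
end

section
/- Let γ ∈ (0,1) and let 0 < v ≤ u be real numbers. Then u^γ − v^γ ≤ (γ/2) (u − v) (u^{γ−1} + v^{γ−1}). -/
open Real Set

private lemma g_hasDerivAt (γ : ℝ) {t : ℝ} (ht : 0 < t) :
    HasDerivAt (fun t : ℝ => (γ/2)*(t-1)*(t^(γ-1)+1) - (t^γ - 1))
      ((γ/2)*(t^(γ-1)+1) + (γ/2)*(t-1)*((γ-1)*t^(γ-1-1)) - γ*t^(γ-1)) t := by
  have h1 : HasDerivAt (fun t : ℝ => t ^ (γ-1)) ((γ-1)*t^(γ-1-1)) t :=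
    Real.hasDerivAt_rpow_const (Or.inl ht.ne')
  have h2 : HasDerivAt (fun t : ℝ => t ^ γ) (γ*t^(γ-1)) t :=
    Real.hasDerivAt_rpow_const (Or.inl ht.ne')
  have h3 : HasDerivAt (fun t : ℝ => (γ/2)*(t-1)) (γ/2) t := by
    simpa using ((hasDerivAt_id t).sub_const 1).const_mul (γ/2)
  have := (h3.mul (h1.add_const 1)).sub (h2.sub_const 1)
  exact this

private lemma key_aux (γ : ℝ) (hγ0 : 0 < γ) (hγ1 : γ < 1) {t : ℝ} (ht : 1 ≤ t) :
    t ^ γ - 1 ≤ (γ/2)*(t-1)*(t^(γ-1)+1) := by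
  have hmono : MonotoneOn (fun t : ℝ => (γ/2)*(t-1)*(t^(γ-1)+1) - (t^γ - 1)) (Ici 1) := by
    apply monotoneOn_of_deriv_nonneg (convex_Ici 1)
    · exact fun x hx => ((g_hasDerivAt γ (lt_of_lt_of_le one_pos hx)).continuousAt).continuousWithinAt
    · intro x hx
      rw [interior_Ici] at hx
      exact ((g_hasDerivAt γ (lt_trans one_pos hx)).differentiableAt).differentiableWithinAt
    · intro x hx
      rw [interior_Ici] at hx
      have hx0 : (0:ℝ) < x := lt_trans one_pos hx
      rw [(g_hasDerivAt γ hx0).deriv]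
      -- Bernoulli: 1 + (2-γ)*(x-1) ≤ x^(2-γ)
      have hb : 1 + (2-γ)*(x-1) ≤ x ^ (2-γ) := by
        have := one_add_mul_self_le_rpow_one_add (s := x - 1) (by linarith) (p := 2 - γ) (by linarith)
        simpa [add_sub_cancel] using this
      -- multiply by x^(γ-2) > 0
      have hp : (0:ℝ) < x ^ (γ-2) := Real.rpow_pos_of_pos hx0 _
      have h2 : (1 + (2-γ)*(x-1)) * x^(γ-2) ≤ x^(2-γ) * x^(γ-2) :=
        mul_le_mul_of_nonneg_right hb hp.le
      rw [← Real.rpow_add hx0] at h2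
      have hxg1 : x * x^(γ-2) = x^(γ-1) := by
        rw [← Real.rpow_one_add' hx0.le (by intro h; linarith : (1:ℝ) + (γ-2) ≠ 0)]
        ring_nf
      have h20 : (2:ℝ) - γ + (γ - 2) = 0 := by ring
      rw [h20, Real.rpow_zero] at h2
      -- h2 : x^(γ-2) + (2-γ)*(x*x^(γ-2) - x^(γ-2)) ≤ 1 roughly; expand
      have hexp : (1 + (2-γ)*(x-1)) * x^(γ-2)
          = x^(γ-2) + (2-γ)*(x^(γ-1) - x^(γ-2)) := by
        rw [← hxg1]; ring
      rw [hexp] at h2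
      have hd2 : γ - 1 - 1 = γ - 2 := by ring
      rw [hd2]
      nlinarith [Real.rpow_pos_of_pos hx0 (γ-1), Real.rpow_pos_of_pos hx0 (γ-2)]
  have := hmono (self_mem_Ici) (mem_Ici.2 ht) ht
  simp only [sub_self, Real.one_rpow, mul_zero, zero_mul, mul_one, sub_zero] at this
  linarith [this]

/-- **Secant-slope inequality from convexity of `u ↦ γ u^{γ−1}`.**
Let `γ ∈ (0,1)` and `0 < v ≤ u`. Then
`u^γ − v^γ ≤ (γ/2) (u − v) (u^{γ−1} + v^{γ−1})`. -/
theorem rpow_sub_rpow_le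
    (γ u v : ℝ) (hγ0 : 0 < γ) (hγ1 : γ < 1) (hv : 0 < v) (hvu : v ≤ u) :
    u ^ γ - v ^ γ ≤ (γ / 2) * (u - v) * (u ^ (γ - 1) + v ^ (γ - 1)) := by
  have hu : 0 < u := lt_of_lt_of_le hv hvu
  have ht : 1 ≤ u / v := (one_le_div hv).2 hvu
  have key := key_aux γ hγ0 hγ1 ht
  rw [Real.div_rpow hu.le hv.le, Real.div_rpow hu.le hv.le] at key
  have hvγ : (0:ℝ) < v ^ γ := Real.rpow_pos_of_pos hv _
  have hvγ1 : (0:ℝ) < v ^ (γ-1) := Real.rpow_pos_of_pos hv _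
  have hmul := mul_le_mul_of_nonneg_left key hvγ.le
  -- v^γ = v * v^(γ-1)
  have hvv : v ^ γ = v * v^(γ-1) := by
    rw [← Real.rpow_one_add' hv.le (by intro h; linarith : (1:ℝ) + (γ-1) ≠ 0)]
    norm_num
  have hexp : v^γ * ((γ/2)*(u/v-1)*(u^(γ-1)/v^(γ-1)+1))
      = (γ/2)*(u-v)*(u^(γ-1)+v^(γ-1)) := by
    field_simp
    rw [hvv]
    ring
  calc u ^ γ - v ^ γ = v^γ * (u^γ/v^γ - 1) := by field_simp
    _ ≤ v^γ * ((γ/2)*(u/v-1)*(u^(γ-1)/v^(γ-1)+1)) := hmul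
    _ = (γ/2)*(u-v)*(u^(γ-1)+v^(γ-1)) := hexp
end

section
/- Let γ ∈ (0,1). There exists a constant C, depending only on γ, such that for all real numbers v ≥ 0, a > 0 and b > 0, setting u = v + 2a, one has u^{1−γ} (v + 2b)^{1−γ} − v^{1−γ} (u + 2b)^{1−γ} ≤ C · a · b · (u v + (u + v) b)^{−γ}. -/
open Real

private lemma add_rpow_le' {x y p : ℝ} (hx : 0 ≤ x) (hy : 0 ≤ y) (hp : 0 ≤ p) (hp1 : p ≤ 1) :
    (x + y) ^ p ≤ x ^ p + y ^ p := by
  have h := NNReal.rpow_add_le_add_rpow x.toNNReal y.toNNReal hp hp1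
  have h' := NNReal.coe_le_coe.mpr h
  push_cast [NNReal.coe_rpow] at h'
  rwa [Real.coe_toNNReal _ hx, Real.coe_toNNReal _ hy] at h'

private lemma concave_rpow_bound {Q P s : ℝ} (hQ : 0 < Q) (hQP : Q ≤ P)
    (hs : 0 ≤ s) (hs1 : s ≤ 1) :
    P ^ s ≤ Q ^ s + s * Q ^ (s - 1) * (P - Q) := by
  have ht : 0 ≤ (P - Q) / Q := div_nonneg (by linarith) hQ.le
  have hP : P = Q * (1 + (P - Q) / Q) := by field_simp; ring
  have hb : (1 + (P - Q) / Q) ^ s ≤ 1 + s * ((P - Q) / Q) :=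
    rpow_one_add_le_one_add_mul_self (by linarith) hs hs1
  calc P ^ s = Q ^ s * (1 + (P - Q) / Q) ^ s := by
        rw [← Real.mul_rpow hQ.le (by linarith)]; rw [← hP]
    _ ≤ Q ^ s * (1 + s * ((P - Q) / Q)) := by
        exact mul_le_mul_of_nonneg_left hb (Real.rpow_nonneg hQ.le s)
    _ = Q ^ s + s * (Q ^ s / Q) * (P - Q) := by field_simp
    _ = Q ^ s + s * Q ^ (s - 1) * (P - Q) := by
        rw [← Real.rpow_sub_one hQ.ne' s]

/-- **Key inequality in the proof of Lemma 5.2.**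
Let `γ ∈ (0,1)`. There exists a constant `C`, depending only on `γ`, such that for
all `v ≥ 0`, `a > 0`, `b > 0`, setting `u = v + 2a`,
`u^{1−γ} (v + 2b)^{1−γ} − v^{1−γ} (u + 2b)^{1−γ} ≤ C a b (u v + (u + v) b)^{−γ}`. -/
theorem rpow_difference_bound
    (γ : ℝ) (hγ0 : 0 < γ) (hγ1 : γ < 1) :
    ∃ C : ℝ, ∀ v a b : ℝ, 0 ≤ v → 0 < a → 0 < b →
      (v + 2 * a) ^ (1 - γ) * (v + 2 * b) ^ (1 - γ)
          - v ^ (1 - γ) * ((v + 2 * a) + 2 * b) ^ (1 - γ)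
        ≤ C * a * b * ((v + 2 * a) * v + ((v + 2 * a) + v) * b) ^ (-γ) := by
  refine ⟨8, fun v a b hv ha hb => ?_⟩
  set u := v + 2 * a with hu
  have hu0 : 0 < u := by positivity
  set P := u * (v + 2 * b) with hPdef
  set Q := v * (u + 2 * b) with hQdef
  set S := u * v + (u + v) * b with hSdef
  have hP0 : 0 < P := by positivity
  have hQ0 : 0 ≤ Q := by positivity
  have hS0 : 0 < S := by positivity
  have hPQ : P - Q = 4 * (a * b) := by rw [hPdef, hQdef, hu]; ring
  have hSQ : S - Q = 2 * (a * b) := by rw [hSdef, hQdef, hu]; ring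
  have hSP : S ≤ P := by nlinarith
  have hs0 : 0 ≤ 1 - γ := by linarith
  have hs1 : 1 - γ ≤ 1 := by linarith
  -- rewrite products of rpows
  have hm1 : u ^ (1 - γ) * (v + 2 * b) ^ (1 - γ) = P ^ (1 - γ) :=
    (Real.mul_rpow hu0.le (by positivity)).symm
  have hm2 : v ^ (1 - γ) * (u + 2 * b) ^ (1 - γ) = Q ^ (1 - γ) :=
    (Real.mul_rpow hv (by positivity)).symm
  rw [hm1, hm2]
  have hab : 0 < a * b := by positivity
  by_cases hcase : S ≤ 8 * (a * b)
  · -- small S: use subadditivity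
    have h1 : P ^ (1 - γ) ≤ Q ^ (1 - γ) + (4 * (a * b)) ^ (1 - γ) := by
      have := add_rpow_le' hQ0 (by positivity : (0:ℝ) ≤ 4 * (a * b)) hs0 hs1
      calc P ^ (1 - γ) = (Q + 4 * (a * b)) ^ (1 - γ) := by rw [show Q + 4*(a*b) = P by linarith]
        _ ≤ _ := this
    have h2 : (4 * (a * b)) ^ (1 - γ) = 4 * (a * b) * (4 * (a * b)) ^ (-γ) := by
      rw [show (1 - γ) = 1 + (-γ) by ring, Real.rpow_add (by positivity), Real.rpow_one]
    have h3 : (4 * (a * b)) ^ (-γ) ≤ (S / 2) ^ (-γ) :=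
      Real.rpow_le_rpow_of_nonpos (by positivity) (by linarith) (by linarith)
    have h4 : (S / 2) ^ (-γ) = 2 ^ γ * S ^ (-γ) := by
      rw [Real.div_rpow hS0.le (by norm_num), Real.rpow_neg (by norm_num : (0:ℝ) ≤ 2)]
      field_simp
    have h5 : (2:ℝ) ^ γ ≤ 2 := by
      calc (2:ℝ) ^ γ ≤ 2 ^ (1:ℝ) := Real.rpow_le_rpow_of_exponent_le (by norm_num) (by linarith)
        _ = 2 := Real.rpow_one 2
    have hSneg : 0 < S ^ (-γ) := Real.rpow_pos_of_pos hS0 _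
    calc P ^ (1 - γ) - Q ^ (1 - γ) ≤ (4 * (a * b)) ^ (1 - γ) := by linarith
      _ = 4 * (a * b) * (4 * (a * b)) ^ (-γ) := h2
      _ ≤ 4 * (a * b) * (2 ^ γ * S ^ (-γ)) := by
          rw [← h4]; exact mul_le_mul_of_nonneg_left h3 (by positivity)
      _ ≤ 4 * (a * b) * (2 * S ^ (-γ)) := by
          apply mul_le_mul_of_nonneg_left _ (by positivity)
          exact mul_le_mul_of_nonneg_right h5 hSneg.le
      _ = 8 * a * b * S ^ (-γ) := by ring
  · -- large S: use concavity
    push_neg at hcase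
    have hQpos : 0 < Q := by linarith
    have hQS : (3 / 4) * S ≤ Q := by linarith
    have hcb := concave_rpow_bound hQpos (by linarith : Q ≤ P) hs0 hs1
    have hstep : P ^ (1 - γ) - Q ^ (1 - γ) ≤ (1 - γ) * Q ^ (-γ) * (4 * (a * b)) := by
      have : (1 - γ) - 1 = -γ := by ring
      rw [← this, ← hPQ]; linarith
    have hQnegle : Q ^ (-γ) ≤ ((3/4) * S) ^ (-γ) :=
      Real.rpow_le_rpow_of_nonpos (by positivity) hQS (by linarith)
    have h34 : ((3/4) * S) ^ (-γ) = (3/4 : ℝ) ^ (-γ) * S ^ (-γ) :=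
      Real.mul_rpow (by norm_num) hS0.le
    have h34le : ((3:ℝ)/4) ^ (-γ) ≤ 4/3 := by
      rw [Real.rpow_neg (by norm_num), inv_le_comm₀ (Real.rpow_pos_of_pos (by norm_num) _)
        (by norm_num)]
      have : (3/4 : ℝ) = (4/3 : ℝ)⁻¹ := by norm_num
      have h1 : (3/4 : ℝ) ^ (1:ℝ) ≤ (3/4 : ℝ) ^ γ :=
        Real.rpow_le_rpow_of_exponent_ge (by norm_num) (by norm_num) (le_of_lt hγ1)
      rw [Real.rpow_one] at h1
      linarith [h1]
    have hSneg : 0 < S ^ (-γ) := Real.rpow_pos_of_pos hS0 _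
    have hchain : Q ^ (-γ) ≤ (4/3) * S ^ (-γ) := by
      calc Q ^ (-γ) ≤ ((3/4) * S) ^ (-γ) := hQnegle
        _ = (3/4 : ℝ) ^ (-γ) * S ^ (-γ) := h34
        _ ≤ (4/3) * S ^ (-γ) := mul_le_mul_of_nonneg_right h34le hSneg.le
    calc P ^ (1 - γ) - Q ^ (1 - γ) ≤ (1 - γ) * Q ^ (-γ) * (4 * (a * b)) := hstep
      _ ≤ 1 * ((4/3) * S ^ (-γ)) * (4 * (a * b)) := by
          refine mul_le_mul_of_nonneg_right ?_ (by positivity)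
          exact mul_le_mul (by linarith) hchain (Real.rpow_nonneg hQpos.le _) (by norm_num)
      _ ≤ 8 * a * b * S ^ (-γ) := by nlinarith [hSneg.le]
end

section
/- Let R > 1. Define, for (t, x) ∈ ℝ × ℝ³, t* = t + R + 1 and Λ(t,x) = (t*)² − |x|², and define the map Φ(t, x) = ( R − t*/Λ(t,x), x/Λ(t,x) ) wherever Λ(t,x) ≠ 0. Let D = { (t, x) ∈ ℝ × ℝ³ : (t*)² − |x|² ≥ R^{−1} t* and t* > 0 }. Then the image of D under Φ equals the truncated backward light cone { (t̃, x̃) ∈ ℝ × ℝ³ : t̃ ≥ 0 and t̃ + |x̃| < R }; moreover the image under Φ of the hyperboloid H = { (t, x) : (t*)² − |x|² = R^{−1} t* > 0 } equals { (0, x̃) : |x̃| < R }. -/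
/-- The conformal compactification map
`Φ(t, x) = (R − t*/Λ, x/Λ)` where `t* = t + R + 1` and `Λ = (t*)² − |x|²`. -/
noncomputable def conformalMap (R : ℝ) (p : ℝ × EuclideanSpace ℝ (Fin 3)) :
    ℝ × EuclideanSpace ℝ (Fin 3) :=
  (R - (p.1 + R + 1) / ((p.1 + R + 1) ^ 2 - ‖p.2‖ ^ 2),
    ((p.1 + R + 1) ^ 2 - ‖p.2‖ ^ 2)⁻¹ • p.2)

lemma conformal_fwd (R : ℝ) (hR : 1 < R) (p : ℝ × EuclideanSpace ℝ (Fin 3))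
    (hs : 0 < p.1 + R + 1)
    (hΛ : R⁻¹ * (p.1 + R + 1) ≤ (p.1 + R + 1) ^ 2 - ‖p.2‖ ^ 2) :
    0 ≤ (conformalMap R p).1 ∧ (conformalMap R p).1 + ‖(conformalMap R p).2‖ < R := by
  have hR0 : (0:ℝ) < R := lt_trans one_pos hR
  set s := p.1 + R + 1 with hsdef
  set L := s ^ 2 - ‖p.2‖ ^ 2 with hLdef
  have hL0 : 0 < L := lt_of_lt_of_le (by positivity) hΛ
  have hxs : ‖p.2‖ < s := by nlinarith [norm_nonneg p.2]
  have hnorm : ‖(conformalMap R p).2‖ = L⁻¹ * ‖p.2‖ := by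
    simp only [conformalMap, norm_smul, Real.norm_eq_abs, ← hsdef, ← hLdef,
      abs_of_pos (inv_pos.mpr hL0)]
  have h1 : (conformalMap R p).1 = R - s / L := rfl
  constructor
  · rw [h1, sub_nonneg, div_le_iff₀ hL0]
    rw [inv_mul_le_iff₀ hR0] at hΛ
    linarith [hΛ]
  · rw [h1, hnorm, div_eq_mul_inv]
    nlinarith [mul_lt_mul_of_pos_right hxs (inv_pos.mpr hL0)]

lemma conformal_bwd (R : ℝ) (hR : 1 < R) (q : ℝ × EuclideanSpace ℝ (Fin 3))
    (h1 : 0 ≤ q.1) (h2 : q.1 + ‖q.2‖ < R) :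
    ∃ p : ℝ × EuclideanSpace ℝ (Fin 3),
      (R⁻¹ * (p.1 + R + 1) ≤ (p.1 + R + 1) ^ 2 - ‖p.2‖ ^ 2 ∧ 0 < p.1 + R + 1) ∧
      (q.1 = 0 → (p.1 + R + 1) ^ 2 - ‖p.2‖ ^ 2 = R⁻¹ * (p.1 + R + 1)) ∧
      conformalMap R p = q := by
  have hR0 : (0:ℝ) < R := lt_trans one_pos hR
  set u := R - q.1 with hudef
  have hxu : ‖q.2‖ < u := by rw [hudef]; linarith
  have hu0 : 0 < u := lt_of_le_of_lt (norm_nonneg q.2) hxu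
  set l := u ^ 2 - ‖q.2‖ ^ 2 with hldef
  have hl0 : 0 < l := by nlinarith [norm_nonneg q.2]
  refine ⟨(u / l - R - 1, l⁻¹ • q.2), ?_⟩
  have hs : (u / l - R - 1) + R + 1 = u / l := by ring
  have hnorm : ‖l⁻¹ • q.2‖ = l⁻¹ * ‖q.2‖ := by
    rw [norm_smul, Real.norm_eq_abs, abs_of_pos (inv_pos.mpr hl0)]
  have hL : ((u / l - R - 1) + R + 1) ^ 2 - ‖l⁻¹ • q.2‖ ^ 2 = l⁻¹ := by
    rw [hs, hnorm]
    field_simp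
    rw [hldef]
  have hs0 : 0 < (u / l - R - 1) + R + 1 := by rw [hs]; positivity
  refine ⟨⟨?_, hs0⟩, ?_, ?_⟩
  · rw [hL, hs, div_eq_mul_inv, ← mul_assoc]
    have hu_le : R⁻¹ * u ≤ 1 := by
      rw [inv_mul_le_iff₀ hR0]; rw [hudef]; linarith
    nlinarith [inv_pos.mpr hl0]
  · intro hq1
    rw [hL, hs]
    have hu : u = R := by rw [hudef, hq1]; ring
    rw [hu]
    field_simp
  · have hΦ1 : (conformalMap R (u / l - R - 1, l⁻¹ • q.2)).1 = q.1 := by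
      show R - ((u / l - R - 1) + R + 1) / (((u / l - R - 1) + R + 1) ^ 2 - ‖l⁻¹ • q.2‖ ^ 2) = q.1
      rw [hL, hs]
      have h : u / l / l⁻¹ = u := by field_simp
      rw [h, hudef]; ring
    have hΦ2 : (conformalMap R (u / l - R - 1, l⁻¹ • q.2)).2 = q.2 := by
      show (((u / l - R - 1) + R + 1) ^ 2 - ‖l⁻¹ • q.2‖ ^ 2)⁻¹ • (l⁻¹ • q.2) = q.2
      rw [hL, inv_inv, smul_smul, mul_inv_cancel₀ (ne_of_gt hl0), one_smul]
    exact Prod.ext hΦ1 hΦ2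

/-- **The conformal compactification (Section 6).**
Let `R > 1`, `t* = t + R + 1` and `Λ = (t*)² − |x|²`. The map
`Φ(t,x) = (R − t*/Λ, x/Λ)` sends the region
`D = {(t,x) : (t*)² − |x|² ≥ R⁻¹ t*, t* > 0}` onto the truncated backward light cone
`{(t̃, x̃) : t̃ ≥ 0, t̃ + |x̃| < R}`, and sends the hyperboloid
`H = {(t,x) : (t*)² − |x|² = R⁻¹ t* > 0}` onto the initial ball `{(0, x̃) : |x̃| < R}`. -/
theorem conformalMap_image
    (R : ℝ) (hR : 1 < R) :
    conformalMap R '' {p : ℝ × EuclideanSpace ℝ (Fin 3) |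
        R⁻¹ * (p.1 + R + 1) ≤ (p.1 + R + 1) ^ 2 - ‖p.2‖ ^ 2 ∧ 0 < p.1 + R + 1}
      = {q : ℝ × EuclideanSpace ℝ (Fin 3) | 0 ≤ q.1 ∧ q.1 + ‖q.2‖ < R} ∧
    conformalMap R '' {p : ℝ × EuclideanSpace ℝ (Fin 3) |
        (p.1 + R + 1) ^ 2 - ‖p.2‖ ^ 2 = R⁻¹ * (p.1 + R + 1) ∧ 0 < p.1 + R + 1}
      = {q : ℝ × EuclideanSpace ℝ (Fin 3) | q.1 = 0 ∧ ‖q.2‖ < R} := by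
  have hR0 : (0:ℝ) < R := lt_trans one_pos hR
  constructor
  · ext q
    simp only [Set.mem_image, Set.mem_setOf_eq]
    constructor
    · rintro ⟨p, ⟨hΛ, hs⟩, rfl⟩
      exact conformal_fwd R hR p hs hΛ
    · rintro ⟨h1, h2⟩
      obtain ⟨p, hp, _, hΦ⟩ := conformal_bwd R hR q h1 h2
      exact ⟨p, hp, hΦ⟩
  · ext q
    simp only [Set.mem_image, Set.mem_setOf_eq]
    constructor
    · rintro ⟨p, ⟨hΛ, hs⟩, rfl⟩
      have hle : R⁻¹ * (p.1 + R + 1) ≤ (p.1 + R + 1) ^ 2 - ‖p.2‖ ^ 2 := le_of_eq hΛ.symm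
      obtain ⟨h1, h2⟩ := conformal_fwd R hR p hs hle
      have hL0 : 0 < (p.1 + R + 1) ^ 2 - ‖p.2‖ ^ 2 := by
        rw [hΛ]; positivity
      have hfst : (conformalMap R p).1 = 0 := by
        show R - (p.1 + R + 1) / ((p.1 + R + 1) ^ 2 - ‖p.2‖ ^ 2) = 0
        rw [hΛ]
        field_simp
        ring
      exact ⟨hfst, by rw [hfst] at h2; linarith⟩
    · rintro ⟨h1, h2⟩
      obtain ⟨p, ⟨_, hs⟩, heq, hΦ⟩ := conformal_bwd R hR q (le_of_eq h1.symm) (by linarith [h2, norm_nonneg q.2])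
      exact ⟨p, ⟨heq h1, hs⟩, hΦ⟩
end
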